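/- Let f be a multiplicative function, p a prime, (κ_α)_{α≥0} a sequence of complex numbers with κ_0 = 0, and (a_α)_{α≥1} a sequence of positive integers with 1 ≤ a_α ≤ α. Then the function h(n) = Σ_{k=1}^{n} f(gcd(k,n)) − κ_{v_p(n)} · Σ_{1≤k≤n, v_p(k) = v_p(n) − a_{v_p(n)}} f(gcd(k,n)) is multiplicative. -/

import Mathlib

/-!
Both sums defining `h` run over `k ∈ [1, n]` and their summands are periodic in `k`:
`f (gcd k n)` has period `n`, and for `k ≥ 1` the condition `v_p(k) = β` only depends on `k`
modulo `p ^ (β + 1)`. By the Chinese remainder theorem, the sum over `[1, m n]` of the product of an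
`m`-periodic and an `n`-periodic function factors when `m` and `n` are coprime. If moreover
`p ∤ n`, then `v_p(m n) = v_p(m) =: α`, and for `α ≥ 1` the condition `v_p(k) = α - a_α` has
modulus `p ^ (α - a_α + 1) ∣ m`, so both sums split off the factor `Σ_{k ≤ n} f (gcd k n)`,
which is `h n` because `κ_0 = 0`.
-/

open Finset

variable {R : Type*} [CommSemiring R]

theorem Function.Periodic.sum_Icc_one_eq_sum_range {F : ℕ → R} {n : ℕ} (hF : F.Periodic n) :
    ∑ k ∈ Icc 1 n, F k = ∑ k ∈ range n, F k := by
  rcases n.eq_zero_or_pos with rfl | hn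
  · simp
  have hF0 : F n = F 0 := by simpa using hF 0
  rw [← Ico_add_one_right_eq_Icc, sum_Ico_succ_top hn, sum_range_eq_add_Ico F hn, hF0, add_comm]

theorem Nat.Coprime.sum_range_mul_eq_mul_sum_range {m n : ℕ} (hmn : m.Coprime n) {F G : ℕ → R}
    (hF : F.Periodic m) (hG : G.Periodic n) :
    ∑ k ∈ range (m * n), F k * G k = (∑ i ∈ range m, F i) * ∑ j ∈ range n, G j := by
  rcases m.eq_zero_or_pos with rfl | hm
  · simp
  rcases n.eq_zero_or_pos with rfl | hn
  · simp
  have hcrt_lt (i j : ℕ) : Nat.chineseRemainder hmn i j < m * n :=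
    Nat.chineseRemainder_lt_mul hmn i j hm.ne' hn.ne'
  rw [sum_mul_sum, ← sum_product']
  refine sum_nbij' (fun k => (k % m, k % n)) (fun ij => Nat.chineseRemainder hmn ij.1 ij.2)
    (fun k _ => ?_) (fun ij _ => mem_range.2 (hcrt_lt _ _)) (fun k hk => ?_) (fun ij hij => ?_)
    (fun k _ => ?_)
  · simp [Nat.mod_lt _ hm, Nat.mod_lt _ hn]
  · have hk' := Nat.chineseRemainder_modEq_unique hmn (Nat.mod_modEq k m).symm
      (Nat.mod_modEq k n).symm
    rwa [Nat.ModEq, Nat.mod_eq_of_lt (mem_range.1 hk), Nat.mod_eq_of_lt (hcrt_lt _ _), eq_comm]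
      at hk'
  · obtain ⟨h₁, h₂⟩ := (Nat.chineseRemainder hmn ij.1 ij.2).prop
    simp only [mem_product, mem_range] at hij
    simp only [Nat.ModEq, Nat.mod_eq_of_lt hij.1, Nat.mod_eq_of_lt hij.2] at h₁ h₂
    simp [h₁, h₂]
  · simp only [hF.map_mod_nat, hG.map_mod_nat]

theorem Nat.Coprime.sum_Icc_mul_eq_mul_sum_Icc {m n : ℕ} (hmn : m.Coprime n) {F G : ℕ → R}
    (hF : F.Periodic m) (hG : G.Periodic n) :
    ∑ k ∈ Icc 1 (m * n), F k * G k = (∑ i ∈ Icc 1 m, F i) * ∑ j ∈ Icc 1 n, G j := by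
  have hFG : (fun k => F k * G k).Periodic (m * n) :=
    (mul_comm n m ▸ hF.nat_mul n).mul (hG.nat_mul m)
  rw [hFG.sum_Icc_one_eq_sum_range, hF.sum_Icc_one_eq_sum_range, hG.sum_Icc_one_eq_sum_range,
    hmn.sum_range_mul_eq_mul_sum_range hF hG]

theorem periodic_map_gcd {α : Type*} (f : ℕ → α) (n : ℕ) :
    Function.Periodic (fun k => f (k.gcd n)) n :=
  fun k => by simp only [Nat.gcd_add_self_left]

theorem map_gcd_mul_of_coprime {f : ℕ → R} (hf : ∀ m n : ℕ, m.Coprime n → f (m * n) = f m * f n)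
    {m n : ℕ} (hmn : m.Coprime n) (k : ℕ) :
    f (k.gcd (m * n)) = f (k.gcd m) * f (k.gcd n) := by
  rw [hmn.gcd_mul k]
  exact hf _ _ ((hmn.coprime_dvd_left (k.gcd_dvd_right m)).coprime_dvd_right (k.gcd_dvd_right n))

theorem sum_Icc_map_gcd_mul_of_coprime {f : ℕ → R}
    (hf : ∀ m n : ℕ, m.Coprime n → f (m * n) = f m * f n) {m n : ℕ} (hmn : m.Coprime n) :
    ∑ k ∈ Icc 1 (m * n), f (k.gcd (m * n)) =
      (∑ k ∈ Icc 1 m, f (k.gcd m)) * ∑ k ∈ Icc 1 n, f (k.gcd n) := by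
  simp only [map_gcd_mul_of_coprime hf hmn]
  exact hmn.sum_Icc_mul_eq_mul_sum_Icc (periodic_map_gcd f m) (periodic_map_gcd f n)

theorem padicValNat_eq_iff_pow_dvd_and_not_pow_succ_dvd {p k β : ℕ} (hp : p ≠ 1) (hk : k ≠ 0) :
    padicValNat p k = β ↔ p ^ β ∣ k ∧ ¬ p ^ (β + 1) ∣ k := by
  rw [← Nat.cast_inj (R := ℕ∞), padicValNat_eq_emultiplicity_of_ne_one hp hk, emultiplicity_eq_coe]

theorem sum_filter_padicValNat_eq_mul_of_coprime {f : ℕ → R}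
    (hf : ∀ m n : ℕ, m.Coprime n → f (m * n) = f m * f n) {p m n β : ℕ} (hp : p ≠ 1)
    (hmn : m.Coprime n) (hβm : p ^ (β + 1) ∣ m) :
    ∑ k ∈ (Icc 1 (m * n)).filter (fun k => padicValNat p k = β), f (k.gcd (m * n)) =
      (∑ k ∈ (Icc 1 m).filter (fun k => padicValNat p k = β), f (k.gcd m)) *
        ∑ k ∈ Icc 1 n, f (k.gcd n) := by
  have hval (N : ℕ) : ∀ k ∈ Icc 1 N, padicValNat p k = β ↔ p ^ β ∣ k ∧ ¬ p ^ (β + 1) ∣ k :=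
    fun k hk => padicValNat_eq_iff_pow_dvd_and_not_pow_succ_dvd hp (by simp at hk; omega)
  have hperiodic : Function.Periodic
      (fun k => if p ^ β ∣ k ∧ ¬ p ^ (β + 1) ∣ k then f (k.gcd m) else 0) m := fun k => by
    simp only [Nat.gcd_add_self_left, Nat.dvd_add_left hβm,
      Nat.dvd_add_left ((pow_dvd_pow p β.le_succ).trans hβm)]
  rw [filter_congr (hval _), filter_congr (hval _), sum_filter, sum_filter]
  simp only [map_gcd_mul_of_coprime hf hmn, ← ite_zero_mul]
  exact hmn.sum_Icc_mul_eq_mul_sum_Icc hperiodic (periodic_map_gcd f n)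

theorem h1_multiplicative (f : ℕ → ℂ) (hf1 : f 1 = 1)
    (hf : ∀ m n : ℕ, Nat.Coprime m n → f (m * n) = f m * f n)
    (p : ℕ) (hp : p.Prime)
    (κ : ℕ → ℂ) (hκ0 : κ 0 = 0)
    (a : ℕ → ℕ) (ha : ∀ α : ℕ, 1 ≤ α → 1 ≤ a α ∧ a α ≤ α)
    (h : ℕ → ℂ)
    (hdef : ∀ n : ℕ, h n =
      (∑ k ∈ Finset.Icc 1 n, f (Nat.gcd k n)) -
        κ (padicValNat p n) *
          ∑ k ∈ (Finset.Icc 1 n).filter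
              (fun k => padicValNat p k = padicValNat p n - a (padicValNat p n)),
            f (Nat.gcd k n)) :
    h 1 = 1 ∧ ∀ m n : ℕ, 0 < m → 0 < n → Nat.Coprime m n →
      h (m * n) = h m * h n := by
  have := Fact.mk hp
  have hmul : ∀ m n : ℕ, 0 < m → 0 < n → m.Coprime n → ¬ p ∣ n → h (m * n) = h m * h n := by
    intro m n hm hn hmn hpn
    have hvn : padicValNat p n = 0 := padicValNat.eq_zero_of_not_dvd hpn
    have hvmn : padicValNat p (m * n) = padicValNat p m := by
      rw [padicValNat.mul hm.ne' hn.ne', hvn, add_zero]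
    rw [hdef (m * n), hdef m, hdef n, hvn, hvmn, hκ0, zero_mul, sub_zero,
      sum_Icc_map_gcd_mul_of_coprime hf hmn]
    set α := padicValNat p m
    rcases α.eq_zero_or_pos with hα | hα
    · simp [hα, hκ0]
    have hβm : p ^ (α - a α + 1) ∣ m :=
      (pow_dvd_pow p (by have := (ha α hα).1; omega)).trans pow_padicValNat_dvd
    rw [sum_filter_padicValNat_eq_mul_of_coprime hf hp.ne_one hmn hβm]
    ring
  refine ⟨by simp [hdef 1, hκ0, hf1], fun m n hm hn hmn => ?_⟩
  by_cases hpn : p ∣ n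
  · have hpm : ¬ p ∣ m := fun hpm => hp.not_dvd_one (hmn ▸ Nat.dvd_gcd hpm hpn)
    rw [mul_comm m n, hmul n m hn hm hmn.symm hpm, mul_comm]
  · exact hmul m n hm hn hmn hpn
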